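/- arXiv:1511.06048 — 5 statements merged into one kernel-verified Lean document; each statement's English description precedes it below -/
import Mathlib

section
/- Let L be a first-order language all of whose symbols are function symbols, with no nullary and no unary function symbols and only finitely many function symbols in total. Let 𝔄 be an L-structure with underlying set A. Then the preorder with approximations (ᵂA, ≤) consisting of all infinite sequences in A with the reduction relation, equipped with its natural topology, is a Ramsey space (i.e., every subset with the property of Baire is Ramsey) if and only if 𝔄 is a Ramsey algebra. -/
open Function Set

universe u v w

/-- Terms of a purely functional first-order language whose function symbols
of arity `n` form the type `F n`, with variables indexed by `ℕ`. -/
inductive Tm (F : ℕ → Type u) : Type u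
  | var : ℕ → Tm F
  | func : {n : ℕ} → F n → (Fin n → Tm F) → Tm F

namespace Tm

variable {F : ℕ → Type u} {A : Type v} {β : Type w}

/-- The list of (indices of) variables occurring in a term, from left to right. -/
def varList : Tm F → List ℕ
  | .var i => [i]
  | .func (n := n) _ ts => (List.finRange n).flatMap fun i => (ts i).varList

/-- A term is *orderly* if the indices of the variables occurring in it,
read from left to right, are strictly increasing. -/
def Orderly (t : Tm F) : Prop := t.varList.Chain' (· < ·)

/-- `TermLT s t` iff the index of the last variable of `s` is less than the
index of the first variable of `t`. -/
def TermLT (s t : Tm F) : Prop :=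
  ∃ i j, s.varList.getLast? = some i ∧ t.varList.head? = some j ∧ i < j

/-- An infinite sequence of orderly terms is *admissible* iff it is increasing
with respect to `TermLT`. -/
def Admissible (ts : ℕ → Tm F) : Prop :=
  (∀ i, (ts i).Orderly) ∧ ∀ i, TermLT (ts i) (ts (i + 1))

/-- `s.subst σ` replaces each variable `vᵢ` in `s` by `σ i`. -/
def subst (σ : ℕ → Tm F) : Tm F → Tm F
  | .var i => σ i
  | .func f ts => .func f fun i => (ts i).subst σ

/-- Interpretation of a term in a structure with underlying set `A` whose
interpretation of the function symbols is `I`, under the assignment `a`. -/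
def realize (I : ∀ n, F n → (Fin n → A) → A) (a : ℕ → A) : Tm F → A
  | .var i => a i
  | .func (n := n) f ts => I n f fun i => (ts i).realize I a

end Tm

section General

variable {F : ℕ → Type u} {A : Type v} {β : Type w}

/-- `b` is a reduction of `a` (with respect to the algebra `(A, I)`). -/
def SeqReduction (I : ∀ n, F n → (Fin n → A) → A) (b a : ℕ → A) : Prop :=
  ∃ ts : ℕ → Tm F, Tm.Admissible ts ∧ ∀ i, b i = (ts i).realize I a

/-- The set of finite reductions of `a`. -/
def FR (I : ∀ n, F n → (Fin n → A) → A) (a : ℕ → A) : Set A :=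
  { x | ∃ t : Tm F, t.Orderly ∧ x = t.realize I a }

/-- `(A, I)` is a Ramsey algebra. -/
def RamseyAlg (I : ∀ n, F n → (Fin n → A) → A) : Prop :=
  ∀ (a : ℕ → A) (X : Set A),
    ∃ b, SeqReduction I b a ∧ (FR I b ⊆ X ∨ FR I b ∩ X = ∅)

/-- `(A, I)` is Ramsey below `a`. -/
def RamseyBelow (I : ∀ n, F n → (Fin n → A) → A) (a : ℕ → A) : Prop :=
  ∀ b, SeqReduction I b a → ∀ X : Set A,
    ∃ c, SeqReduction I c b ∧ (FR I c ⊆ X ∨ FR I c ∩ X = ∅)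

/-- An increasing tuple `t₁ < t₂ < ⋯ < tₙ` of orderly terms. -/
def OrdTuple {n : ℕ} (t : Fin n → Tm F) : Prop :=
  (∀ i, (t i).Orderly) ∧ ∀ i j : Fin n, i < j → Tm.TermLT (t i) (t j)

/-- `𝒜` (as a function on orderly terms) is an orderly algebra. -/
def IsOrderlyAlg (𝒜 : Tm F → β) : Prop :=
  ∀ (n : ℕ) (f : F n) (t t' : Fin n → Tm F), OrdTuple t → OrdTuple t' →
    (∀ k, 𝒜 (t k) = 𝒜 (t' k)) → 𝒜 (.func f t) = 𝒜 (.func f t')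

/-- The universe of an orderly algebra: its range on orderly terms. -/
def OAUniv (𝒜 : Tm F → β) : Set β := 𝒜 '' { t | t.Orderly }

/-- `ℬ` is a reduction of the orderly algebra `𝒜` (as functions on orderly terms). -/
def OAReduction (ℬ 𝒜 : Tm F → β) : Prop :=
  ∃ ts : ℕ → Tm F, Tm.Admissible ts ∧ ∀ s : Tm F, s.Orderly → ℬ s = 𝒜 (s.subst ts)

/-- `ℬ` is homogeneous for `X`. -/
def Homog (ℬ : Tm F → β) (X : Set β) : Prop :=
  OAUniv ℬ ⊆ X ∨ OAUniv ℬ ∩ X = ∅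

/-- An orderly algebra is weakly Ramsey. -/
def WeaklyRamseyOA (𝒜 : Tm F → β) : Prop :=
  ∀ X ⊆ OAUniv 𝒜, ∃ ℬ, OAReduction ℬ 𝒜 ∧ Homog ℬ X

/-- An orderly algebra is Ramsey. -/
def RamseyOA (𝒜 : Tm F → β) : Prop :=
  ∀ ℬ, OAReduction ℬ 𝒜 → ∀ X ⊆ OAUniv 𝒜, ∃ 𝒞, OAReduction 𝒞 ℬ ∧ Homog 𝒞 X

/-- The orderly algebra induced from the algebra `(A, I)` by the sequence `a`. -/
def inducedOA (I : ∀ n, F n → (Fin n → A) → A) (a : ℕ → A) : Tm F → A :=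
  fun t => t.realize I a

/-- `[FR(c)]ⁿ_<` : increasing `n`-tuples of finite reductions of `c`. -/
def FRtuple (I : ∀ n, F n → (Fin n → A) → A) (n : ℕ) (c : ℕ → A) : Set (Fin n → A) :=
  { x | ∃ t : Fin n → Tm F, OrdTuple t ∧ ∀ i, x i = (t i).realize I c }

/-- `‖𝒞‖ⁿ_<` for an orderly algebra `𝒞`. -/
def OATuple (n : ℕ) (𝒞 : Tm F → β) : Set (Fin n → β) :=
  { x | ∃ t : Fin n → Tm F, OrdTuple t ∧ ∀ i, x i = 𝒞 (t i) }

/-- The basic set `[n, a]` of the preorder with approximations `(ᵂA, ≤)`. -/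
def Approx (I : ∀ n, F n → (Fin n → A) → A) (n : ℕ) (a : ℕ → A) : Set (ℕ → A) :=
  { b | SeqReduction I b a ∧ ∀ i < n, b i = a i }

/-- The natural topology on `ᵂA`, generated by the sets `[n, a]`. -/
def natTop (I : ∀ n, F n → (Fin n → A) → A) : TopologicalSpace (ℕ → A) :=
  TopologicalSpace.generateFrom { S | ∃ n a, S = Approx I n a }

/-- A subset `X ⊆ ᵂA` is Ramsey. -/
def RamseySet (I : ∀ n, F n → (Fin n → A) → A) (X : Set (ℕ → A)) : Prop :=
  ∀ (n : ℕ) (a : ℕ → A), ∃ b ∈ Approx I n a,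
    Approx I n b ⊆ X ∨ Approx I n b ∩ X = ∅

/-- `X` has the property of Baire in the natural topology:
its symmetric difference with some open set is meager. -/
def HasBaireProperty (I : ∀ n, F n → (Fin n → A) → A) (X : Set (ℕ → A)) : Prop :=
  ∃ U : Set (ℕ → A), @IsOpen _ (natTop I) U ∧ @IsMeagre _ (natTop I) (symmDiff X U)

end General

/-- The language with a single binary function symbol. -/
inductive BinF : ℕ → Type
  | f : BinF 2

/-- Application of the binary function symbol: the term `f s t`. -/
def fapp (s t : Tm BinF) : Tm BinF := .func BinF.f ![s, t]

/-- The interpretation of the single binary function symbol by a binary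
operation `g` on `A`. -/
def binI {A : Type v} (g : A → A → A) : ∀ n, BinF n → (Fin n → A) → A
  | _, BinF.f, args => g (args 0) (args 1)

/-- The pair `(tˣ, tʸ)`: `(vᵢˣ, vᵢʸ) = (v_{2i}, v_{2i+1})` and
`((f s t)ˣ, (f s t)ʸ) = (f sˣ sʸ, f tˣ tʸ)`. -/
def xyPair : Tm BinF → Tm BinF × Tm BinF
  | .var i => (.var (2 * i), .var (2 * i + 1))
  | .func BinF.f ts =>
      (fapp (xyPair (ts 0)).1 (xyPair (ts 0)).2, fapp (xyPair (ts 1)).1 (xyPair (ts 1)).2)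

/-- The orderly algebra `♯𝒜`, `♯𝒜(t) = (𝒜(tˣ), 𝒜(tʸ))`. -/
def sharpOA {β : Type w} (𝒜 : Tm BinF → β) : Tm BinF → β × β :=
  fun t => (𝒜 (xyPair t).1, 𝒜 (xyPair t).2)

/-!
The forward direction is immediate: for `X ⊆ A` the set of sequences whose first term lies in `X`
is open, and the first terms of the reductions of `b` are exactly the elements of `FR(b)`.

The converse is the Galvin–Prikry argument, run on the Ellentuck neighbourhoods `[s, r]` of the
sequences that begin with the finite list `s` and continue with a reduction of the reservoir `r`.
In the language of combinatorial forcing, `r` accepts `s` if `[s, r] ⊆ U` and rejects `s` if no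
reduction of `r` accepts it. Applied to the set of those finite reductions whose one-term extensions
are accepted, the Ramsey algebra property reduces any reservoir to one that accepts `s` or rejects
all one-term extensions of `s`. A fusion argument then yields a reservoir that accepts `s` or
rejects every finite extension of `s`, and when `U` is open the latter means `[s, r] ∩ U = ∅`.
Fusion needs that only finitely many orderly terms use the variables `v₀, …, vₖ₋₁`; this is where
the absence of nullary and unary symbols and the finiteness of the language enter. Consequently
dense open sets contain whole neighbourhoods, meagre sets miss whole neighbourhoods, and a set with
the property of Baire agrees with an open set on some neighbourhood.
-/

section Sequences

variable {A : Type v}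

def seqDrop (k : ℕ) (a : ℕ → A) : ℕ → A := fun j => a (j + k)

def seqAppend (s : List A) (d : ℕ → A) : ℕ → A :=
  fun i => if h : i < s.length then s[i] else d (i - s.length)

theorem seqDrop_seqDrop (m k : ℕ) (a : ℕ → A) : seqDrop m (seqDrop k a) = seqDrop (m + k) a :=
  funext fun j => congrArg a (Nat.add_assoc j m k)

theorem seqAppend_of_lt (s : List A) (d : ℕ → A) {i : ℕ} (hi : i < s.length) :
    seqAppend s d i = s[i] := dif_pos hi

theorem seqDrop_seqAppend (s : List A) (d : ℕ → A) : seqDrop s.length (seqAppend s d) = d :=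
  funext fun j => by simp [seqDrop, seqAppend]

theorem seqDrop_seqAppend_range (n : ℕ) (a r : ℕ → A) :
    seqDrop n (seqAppend ((List.range n).map a) r) = r := by
  simpa using seqDrop_seqAppend ((List.range n).map a) r

end Sequences

theorem length_le_of_pairwise_lt {l : List ℕ} {k : ℕ} (hl : l.Pairwise (· < ·))
    (hk : ∀ x ∈ l, x < k) : l.length ≤ k :=
  calc l.length = l.toFinset.card := (List.toFinset_card_of_nodup (hl.imp ne_of_lt)).symm
    _ ≤ (Finset.range k).card :=
      Finset.card_le_card fun x hx => Finset.mem_range.2 (hk x (List.mem_toFinset.1 hx))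
    _ = k := Finset.card_range k

namespace Tm

variable {F : ℕ → Type u} {A : Type v}

theorem varList_subst (σ : ℕ → Tm F) :
    ∀ t : Tm F, (t.subst σ).varList = t.varList.flatMap fun v => (σ v).varList
  | .var i => by simp [subst, varList]
  | .func (n := n) f ts => by
    simp only [subst, varList, List.flatMap_assoc]
    exact List.flatMap_congr fun i _ => varList_subst σ (ts i)

theorem mem_varList_subst {σ : ℕ → Tm F} {t : Tm F} {w : ℕ} :
    w ∈ (t.subst σ).varList ↔ ∃ v ∈ t.varList, w ∈ (σ v).varList := by
  rw [varList_subst, List.mem_flatMap]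

theorem varList_subst_var (f : ℕ → ℕ) (t : Tm F) :
    (t.subst fun v => .var (f v)).varList = t.varList.map f := by
  rw [varList_subst, List.map_eq_flatMap]
  rfl

theorem realize_subst (I : ∀ n, F n → (Fin n → A) → A) (σ : ℕ → Tm F) (a : ℕ → A) :
    ∀ t : Tm F, (t.subst σ).realize I a = t.realize I fun v => (σ v).realize I a
  | .var _ => rfl
  | .func f ts => congrArg (I _ f) (funext fun i => realize_subst I σ a (ts i))

theorem realize_subst_eq (I : ∀ n, F n → (Fin n → A) → A) {σ : ℕ → Tm F} {b h : ℕ → A}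
    (hb : ∀ i, b i = (σ i).realize I h) (t : Tm F) : (t.subst σ).realize I h = t.realize I b :=
  (realize_subst I σ h t).trans (congrArg (realize I · t) (funext hb)).symm

theorem realize_congr (I : ∀ n, F n → (Fin n → A) → A) {a b : ℕ → A} :
    ∀ {t : Tm F}, (∀ v ∈ t.varList, a v = b v) → t.realize I a = t.realize I b
  | .var i, h => h i (by simp [varList])
  | .func f ts, h => congrArg (I _ f) <| funext fun i =>
      realize_congr I fun v hv => h v (List.mem_flatMap_of_mem (List.mem_finRange i) hv)

theorem orderly_iff_pairwise {t : Tm F} : t.Orderly ↔ t.varList.Pairwise (· < ·) :=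
  List.isChain_iff_pairwise

theorem orderly_var (i : ℕ) : (Tm.var i : Tm F).Orderly :=
  List.isChain_singleton i

theorem orderly_subst {σ : ℕ → Tm F} {t : Tm F} (ht : t.Orderly)
    (hσ : ∀ v ∈ t.varList, (σ v).Orderly)
    (hlt : ∀ v ∈ t.varList, ∀ w ∈ t.varList, v < w →
      ∀ x ∈ (σ v).varList, ∀ y ∈ (σ w).varList, x < y) :
    (t.subst σ).Orderly := by
  rw [orderly_iff_pairwise, varList_subst, List.pairwise_flatMap]
  exact ⟨fun v hv => orderly_iff_pairwise.1 (hσ v hv),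
    (orderly_iff_pairwise.1 ht).imp_of_mem fun hv hw hvw => hlt _ hv _ hw hvw⟩

/-- Meant for terms whose variables are all `≥ k`: the subtraction truncates. -/
def lower (k : ℕ) (t : Tm F) : Tm F := t.subst fun v => .var (v - k)

theorem orderly_lower {k : ℕ} {t : Tm F} (ht : t.Orderly) (hk : ∀ v ∈ t.varList, k ≤ v) :
    (t.lower k).Orderly := by
  rw [orderly_iff_pairwise, lower, varList_subst_var, List.pairwise_map]
  refine (orderly_iff_pairwise.1 ht).imp_of_mem fun hv hw hvw => ?_
  have := hk _ hv
  omega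

theorem realize_lower {A : Type v} (I : ∀ n, F n → (Fin n → A) → A) {k : ℕ} {t : Tm F}
    (hk : ∀ v ∈ t.varList, k ≤ v) (h : ℕ → A) :
    (t.lower k).realize I (seqDrop k h) = t.realize I h := by
  rw [lower, realize_subst]
  exact realize_congr I fun v hv => congrArg h (Nat.sub_add_cancel (hk v hv))

theorem Admissible.comp_add {τ : ℕ → Tm F} (hτ : Admissible τ) (q : ℕ) :
    Admissible fun j => τ (j + q) :=
  ⟨fun _ => hτ.1 _, fun j => by simpa only [Nat.add_right_comm j 1 q] using hτ.2 (j + q)⟩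

variable [IsEmpty (F 0)]

theorem varList_ne_nil : ∀ t : Tm F, t.varList ≠ []
  | .var _ => by simp [varList]
  | .func (n := 0) f _ => isEmptyElim f
  | .func (n := _ + 1) _ ts => by
    simpa [varList] using ⟨0, varList_ne_nil (ts 0)⟩

def lastVar (t : Tm F) : ℕ := t.varList.getLast (varList_ne_nil t)

def firstVar (t : Tm F) : ℕ := t.varList.head (varList_ne_nil t)

theorem lastVar_mem (t : Tm F) : t.lastVar ∈ t.varList := List.getLast_mem _

theorem firstVar_mem (t : Tm F) : t.firstVar ∈ t.varList := List.head_mem _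

theorem le_lastVar {t : Tm F} (ht : t.Orderly) {v : ℕ} (hv : v ∈ t.varList) : v ≤ t.lastVar :=
  ((orderly_iff_pairwise.1 ht).imp le_of_lt).rel_getLast hv

theorem firstVar_le {t : Tm F} (ht : t.Orderly) {v : ℕ} (hv : v ∈ t.varList) : t.firstVar ≤ v :=
  ((orderly_iff_pairwise.1 ht).imp le_of_lt).rel_head hv

theorem termLT_iff {s t : Tm F} : TermLT s t ↔ s.lastVar < t.firstVar := by
  simp [TermLT, List.getLast?_eq_some_getLast (varList_ne_nil s),
    List.head?_eq_some_head (varList_ne_nil t), lastVar, firstVar]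

theorem termLT_of_forall_lt {s t : Tm F}
    (h : ∀ x ∈ s.varList, ∀ y ∈ t.varList, x < y) : TermLT s t :=
  termLT_iff.2 (h _ (lastVar_mem s) _ (firstVar_mem t))

theorem TermLT.lt {s t : Tm F} (h : TermLT s t) (hs : s.Orderly) (ht : t.Orderly)
    {x y : ℕ} (hx : x ∈ s.varList) (hy : y ∈ t.varList) : x < y :=
  (le_lastVar hs hx).trans_lt ((termLT_iff.1 h).trans_le (firstVar_le ht hy))

theorem lastVar_lower (k : ℕ) (t : Tm F) : (t.lower k).lastVar = t.lastVar - k := by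
  simp only [lastVar, lower, varList_subst_var, List.getLast_map]

theorem firstVar_lower (k : ℕ) (t : Tm F) : (t.lower k).firstVar = t.firstVar - k := by
  simp only [firstVar, lower, varList_subst_var, List.head_map]

theorem termLT_lower {k : ℕ} {s t : Tm F} (h : TermLT s t)
    (hk : ∀ v ∈ s.varList, k ≤ v) : TermLT (s.lower k) (t.lower k) := by
  rw [termLT_iff, lastVar_lower, firstVar_lower]
  have := hk _ (lastVar_mem s)
  have := termLT_iff.1 h
  omega

theorem Admissible.lt {τ : ℕ → Tm F} (hτ : Admissible τ) {i j : ℕ} (hij : i < j)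
    {x y : ℕ} (hx : x ∈ (τ i).varList) (hy : y ∈ (τ j).varList) : x < y := by
  induction j, hij using Nat.le_induction generalizing y with
  | base => exact (hτ.2 i).lt (hτ.1 i) (hτ.1 _) hx hy
  | succ j _ ih =>
    exact (ih (lastVar_mem _)).trans ((hτ.2 j).lt (hτ.1 j) (hτ.1 _) (lastVar_mem _) hy)

theorem Admissible.le {τ : ℕ → Tm F} (hτ : Admissible τ) {i x : ℕ} (hx : x ∈ (τ i).varList) :
    i ≤ x := by
  induction i generalizing x with
  | zero => exact Nat.zero_le x
  | succ i ih => exact ih (lastVar_mem _) |>.trans_lt (hτ.lt i.lt_succ_self (lastVar_mem _) hx)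

theorem Admissible.orderly_subst {σ : ℕ → Tm F} (hσ : Admissible σ) {t : Tm F} (ht : t.Orderly) :
    (t.subst σ).Orderly :=
  Tm.orderly_subst ht (fun v _ => hσ.1 v) fun _ _ _ _ hvw _ hx _ hy => hσ.lt hvw hx hy

theorem Admissible.subst {τ σ : ℕ → Tm F} (hτ : Admissible τ) (hσ : Admissible σ) :
    Admissible fun i => (τ i).subst σ := by
  refine ⟨fun i => hσ.orderly_subst (hτ.1 i), fun i => termLT_of_forall_lt fun x hx y hy => ?_⟩
  obtain ⟨v, hv, hxv⟩ := mem_varList_subst.1 hx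
  obtain ⟨w, hw, hyw⟩ := mem_varList_subst.1 hy
  exact hσ.lt ((hτ.2 i).lt (hτ.1 i) (hτ.1 _) hv hw) hxv hyw

theorem admissible_var {f : ℕ → ℕ} (hf : StrictMono f) :
    Admissible fun i => (Tm.var (f i) : Tm F) :=
  ⟨fun _ => orderly_var _, fun i => termLT_of_forall_lt fun x hx y hy => by
    simp only [varList, List.mem_singleton] at hx hy
    exact hx ▸ hy ▸ hf i.lt_succ_self⟩

theorem Admissible.lower {τ : ℕ → Tm F} (hτ : Admissible τ) {k : ℕ}
    (hk : ∀ j, ∀ v ∈ (τ j).varList, k ≤ v) : Admissible fun j => (τ j).lower k :=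
  ⟨fun j => orderly_lower (hτ.1 j) (hk j), fun j => termLT_lower (hτ.2 j) (hk j)⟩

theorem Admissible.glue {σ : ℕ → Tm F} (hσ : Admissible σ) {n : ℕ}
    (hn : ∀ j, ∀ v ∈ (σ j).varList, n ≤ v) :
    Admissible fun i => if i < n then .var i else σ (i - n) := by
  refine ⟨fun i => ?_, fun i => ?_⟩
  · dsimp only
    split_ifs
    exacts [orderly_var i, hσ.1 _]
  by_cases hi : i + 1 < n
  · simp only [hi, (Nat.lt_succ_self i).trans hi, if_true]
    exact termLT_of_forall_lt fun x hx y hy => by simp_all [varList]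
  by_cases hi' : i < n
  · simp only [hi, hi', if_true, if_false]
    refine termLT_of_forall_lt fun x hx y hy => ?_
    simp only [varList, List.mem_singleton] at hx
    have := hn _ _ hy
    omega
  · simp only [hi, hi', if_false]
    simpa only [show i + 1 - n = i - n + 1 by omega] using hσ.2 (i - n)

end Tm

section Reduction

open Tm

variable {F : ℕ → Type u} {A : Type v} {I : ∀ n, F n → (Fin n → A) → A}

variable (I) in
/-- The Ellentuck neighbourhood `[s, r]`. -/
def stemSet (s : List A) (r : ℕ → A) : Set (ℕ → A) :=
  {c | (List.range s.length).map c = s ∧ SeqReduction I (seqDrop s.length c) r}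

theorem approx_subset_approx {m n : ℕ} (hmn : m ≤ n) (a : ℕ → A) : Approx I n a ⊆ Approx I m a :=
  fun _ hb => ⟨hb.1, fun i hi => hb.2 i (hi.trans_le hmn)⟩

theorem realize_eq_of_mem_approx {k : ℕ} {a b : ℕ → A} (hb : b ∈ Approx I k a) {t : Tm F}
    (ht : ∀ v ∈ t.varList, v < k) : t.realize I b = t.realize I a :=
  realize_congr I fun v hv => hb.2 v (ht v hv)

theorem map_realize_range_map {τ : ℕ → Tm F} {d h : ℕ → A} (hd : ∀ j, d j = (τ j).realize I h)
    (q : ℕ) : ((List.range q).map τ).map (·.realize I h) = (List.range q).map d := by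
  simp only [List.map_map]
  exact List.map_congr_left fun j _ => (hd j).symm

variable [IsEmpty (F 0)]

theorem SeqReduction.refl (I : ∀ n, F n → (Fin n → A) → A) (a : ℕ → A) : SeqReduction I a a :=
  ⟨Tm.var, admissible_var strictMono_id, fun _ => rfl⟩

theorem SeqReduction.trans {a b c : ℕ → A} (hcb : SeqReduction I c b) (hba : SeqReduction I b a) :
    SeqReduction I c a := by
  obtain ⟨τ, hτ, hc⟩ := hcb
  obtain ⟨σ, hσ, hb⟩ := hba
  exact ⟨fun i => (τ i).subst σ, hτ.subst hσ, fun i => (hc i).trans (realize_subst_eq I hb _).symm⟩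

theorem seqReduction_seqDrop_iff {d h : ℕ → A} {k : ℕ} :
    SeqReduction I d (seqDrop k h) ↔ ∃ τ : ℕ → Tm F, Admissible τ ∧
      (∀ j, ∀ v ∈ (τ j).varList, k ≤ v) ∧ ∀ j, d j = (τ j).realize I h := by
  constructor
  · rintro ⟨σ, hσ, hd⟩
    refine ⟨fun j => (σ j).subst fun v => .var (v + k),
      hσ.subst (admissible_var (strictMono_id.add_const k)), fun j v hv => ?_, fun j => ?_⟩
    · rw [varList_subst_var, List.mem_map] at hv
      obtain ⟨w, _, rfl⟩ := hv
      exact Nat.le_add_left k w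
    · rw [hd, realize_subst]
      rfl
  · rintro ⟨τ, hτ, hk, hd⟩
    exact ⟨fun j => (τ j).lower k, hτ.lower hk, fun j => by rw [hd, realize_lower I (hk j)]⟩

theorem seqReduction_seqDrop_of_le (h : ℕ → A) {k m : ℕ} (hkm : k ≤ m) :
    SeqReduction I (seqDrop m h) (seqDrop k h) :=
  seqReduction_seqDrop_iff.2 ⟨fun j => .var (j + m), admissible_var (strictMono_id.add_const m),
    fun j v hv => by simp only [varList, List.mem_singleton] at hv; omega, fun _ => rfl⟩

theorem seqReduction_seqDrop_firstVar {τ : ℕ → Tm F} (hτ : Admissible τ) {d h : ℕ → A}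
    (hd : ∀ j, d j = (τ j).realize I h) (q : ℕ) :
    SeqReduction I (seqDrop q d) (seqDrop (τ q).firstVar h) := by
  refine seqReduction_seqDrop_iff.2 ⟨fun j => τ (j + q), hτ.comp_add q, fun j v hv => ?_,
    fun j => hd (j + q)⟩
  rcases j.eq_zero_or_pos with rfl | hj
  · exact firstVar_le (hτ.1 _) (by simpa using hv)
  · exact (hτ.lt (by omega) (firstVar_mem _) hv).le

theorem seqReduction_seqDrop_lastVar_subst {σ : ℕ → Tm F} (hσ : Admissible σ) {b h : ℕ → A}
    (hb : ∀ i, b i = (σ i).realize I h) {t : Tm F} (ht : t.Orderly) :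
    SeqReduction I (seqDrop (t.lastVar + 1) b) (seqDrop ((t.subst σ).lastVar + 1) h) := by
  refine (seqReduction_seqDrop_firstVar hσ hb _).trans (seqReduction_seqDrop_of_le h ?_)
  obtain ⟨u, hu, hlast⟩ := mem_varList_subst.1 (lastVar_mem (t.subst σ))
  exact hσ.lt (Nat.lt_succ_of_le (le_lastVar ht hu)) hlast (firstVar_mem _)

theorem stemSet_mono {s : List A} {r r' : ℕ → A} (hr : SeqReduction I r' r) :
    stemSet I s r' ⊆ stemSet I s r :=
  fun _ hc => ⟨hc.1, hc.2.trans hr⟩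

theorem seqAppend_mem_stemSet (s : List A) (r : ℕ → A) : seqAppend s r ∈ stemSet I s r := by
  refine ⟨List.ext_getElem (by simp) fun i hi _ => ?_, ?_⟩
  · simp only [List.getElem_map, List.getElem_range]
    exact seqAppend_of_lt s r (by simpa using hi)
  · rw [seqDrop_seqAppend]
    exact .refl I r

theorem exists_witness_of_seqDrop {n : ℕ} {a b : ℕ → A} (hab : ∀ i < n, b i = a i)
    (hd : SeqReduction I (seqDrop n b) (seqDrop n a)) :
    ∃ τ : ℕ → Tm F, Admissible τ ∧ (∀ i < n, τ i = .var i) ∧ ∀ i, b i = (τ i).realize I a := by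
  obtain ⟨σ, hσ, hn, hd⟩ := seqReduction_seqDrop_iff.1 hd
  refine ⟨_, hσ.glue hn, fun i hi => if_pos hi, fun i => ?_⟩
  split_ifs with hi
  · exact hab i hi
  · have := hd (i - n)
    rwa [seqDrop, Nat.sub_add_cancel (not_lt.1 hi)] at this

theorem mem_approx_iff {n : ℕ} {a b : ℕ → A} :
    b ∈ Approx I n a ↔ (∀ i < n, b i = a i) ∧ SeqReduction I (seqDrop n b) (seqDrop n a) := by
  refine ⟨fun ⟨⟨τ, hτ, hb⟩, hab⟩ => ⟨hab, seqReduction_seqDrop_iff.2 ⟨fun j => τ (j + n),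
    hτ.comp_add n, fun j _ hv => (Nat.le_add_left n j).trans (hτ.le hv), fun j => hb _⟩⟩,
    fun ⟨hab, hd⟩ => ⟨?_, hab⟩⟩
  obtain ⟨τ, hτ, -, hb⟩ := exists_witness_of_seqDrop hab hd
  exact ⟨τ, hτ, hb⟩

theorem exists_witness_of_mem_approx {n : ℕ} {a b : ℕ → A} (hb : b ∈ Approx I n a) :
    ∃ τ : ℕ → Tm F, Admissible τ ∧ (∀ i < n, τ i = .var i) ∧ ∀ i, b i = (τ i).realize I a :=
  exists_witness_of_seqDrop (mem_approx_iff.1 hb).1 (mem_approx_iff.1 hb).2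

theorem approx_eq_stemSet (n : ℕ) (a : ℕ → A) :
    Approx I n a = stemSet I ((List.range n).map a) (seqDrop n a) := by
  ext b
  simp only [mem_approx_iff, stemSet, Set.mem_ofPred_eq, List.length_map, List.length_range,
    List.map_inj_left, List.mem_range]

theorem self_mem_approx (n : ℕ) (a : ℕ → A) : a ∈ Approx I n a :=
  ⟨.refl I a, fun _ _ => rfl⟩

theorem approx_subset_of_mem {n : ℕ} {a b : ℕ → A} (hb : b ∈ Approx I n a) :
    Approx I n b ⊆ Approx I n a :=
  fun _ hc => ⟨hc.1.trans hb.1, fun i hi => (hc.2 i hi).trans (hb.2 i hi)⟩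

theorem stemSet_eq_approx (s : List A) (r : ℕ → A) :
    stemSet I s r = Approx I s.length (seqAppend s r) := by
  rw [approx_eq_stemSet, seqDrop_seqAppend, (seqAppend_mem_stemSet (I := I) s r).1]

theorem seqAppend_mem_approx {n : ℕ} {a r : ℕ → A} (hr : SeqReduction I r (seqDrop n a)) :
    seqAppend ((List.range n).map a) r ∈ Approx I n a := by
  rw [approx_eq_stemSet]
  exact stemSet_mono hr (seqAppend_mem_stemSet _ r)

theorem stemSet_append_eq_approx {s : List A} {c : ℕ → A} (hc : (List.range s.length).map c = s)
    (m : ℕ) :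
    stemSet I (s ++ (List.range m).map (seqDrop s.length c)) (seqDrop m (seqDrop s.length c)) =
      Approx I (s.length + m) c := by
  rw [approx_eq_stemSet, seqDrop_seqDrop, Nat.add_comm m, List.range_add, List.map_append, hc,
    List.map_map]
  congr 3
  funext j
  exact congrArg c (Nat.add_comm _ _)

theorem mem_stemSet_append_range {s : List A} {c : ℕ → A} (hc : (List.range s.length).map c = s)
    (m : ℕ) :
    c ∈ stemSet I (s ++ (List.range m).map (seqDrop s.length c)) (seqDrop m (seqDrop s.length c)) :=
  by rw [stemSet_append_eq_approx hc m]; exact self_mem_approx _ c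

end Reduction

section Fusion

open Tm

variable {F : ℕ → Type u} {A : Type v} [IsEmpty (F 0)] {I : ∀ n, F n → (Fin n → A) → A}

theorem diag_mem_approx {d : ℕ → ℕ → A} (hd : ∀ k, d (k + 1) ∈ Approx I k (d k)) (k : ℕ) :
    (fun i => d (i + 1) i) ∈ Approx I k (d k) := by
  choose W hW hWvar hWd using fun m => exists_witness_of_mem_approx (hd m)
  let C : ℕ → ℕ → Tm F := fun j => Nat.rec Tm.var (fun j Cj i => (W (k + j) i).subst Cj) j
  have hC : ∀ j, Admissible (C j) := fun j => by
    induction j with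
    | zero => exact admissible_var strictMono_id
    | succ j ih => exact (hW (k + j)).subst ih
  have hCd : ∀ j i, d (k + j) i = (C j i).realize I (d k) := fun j => by
    induction j with
    | zero => exact fun _ => rfl
    | succ j ih =>
      intro i
      rw [← Nat.add_assoc, hWd, realize_subst]
      exact congrArg (realize I · _) (funext ih)
  have hCstable : ∀ j i, i < k + j → C (j + 1) i = C j i := fun j i hi => by
    show (W (k + j) i).subst (C j) = C j i
    rw [hWvar _ _ hi]
    rfl
  have hdstable : ∀ i m, i < m → d m i = d (i + 1) i := fun i m him => by
    induction m, him using Nat.le_induction with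
    | base => rfl
    | succ m hm ih => rw [(hd m).2 i hm, ih]
  refine ⟨⟨fun i => C (i + 1) i, ⟨fun i => (hC (i + 1)).1 i, fun i => ?_⟩, fun i => ?_⟩,
    fun i hi => (hdstable i k hi).symm⟩
  · show TermLT (C (i + 1) i) (C (i + 1 + 1) (i + 1))
    rw [← hCstable (i + 1) i (by omega)]
    exact (hC (i + 2)).2 i
  · show d (i + 1) i = (C (i + 1) i).realize I (d k)
    rw [← hdstable i (k + (i + 1)) (by omega)]
    exact hCd (i + 1) i

theorem exists_seqReduction_forall_of_dense (P : ℕ → (ℕ → A) → Prop)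
    (hmono : ∀ k h, P k h → ∀ h' ∈ Approx I k h, P k h')
    (hdense : ∀ k h, ∃ h' ∈ Approx I k h, P k h') (a : ℕ → A) :
    ∃ b, SeqReduction I b a ∧ ∀ k, P k b := by
  choose f hf hPf using hdense
  let d : ℕ → ℕ → A := fun k => Nat.rec a (fun k h => f k h) k
  have hd : ∀ k, d (k + 1) ∈ Approx I k (d k) := fun k => hf k (d k)
  exact ⟨_, (diag_mem_approx hd 0).1, fun k => hmono k _ (hPf k (d k)) _
    (approx_subset_approx k.le_succ _ (diag_mem_approx hd (k + 1)))⟩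

theorem exists_mem_approx_forall_of_finite {ι : Type*} {S : Set ι} (hS : S.Finite) {k : ℕ}
    {Q : ι → (ℕ → A) → Prop} (hmono : ∀ i ∈ S, ∀ h, Q i h → ∀ h' ∈ Approx I k h, Q i h')
    (hdense : ∀ i ∈ S, ∀ h, ∃ h' ∈ Approx I k h, Q i h') (h : ℕ → A) :
    ∃ h' ∈ Approx I k h, ∀ i ∈ S, Q i h' := by
  refine Set.Finite.induction_on_subset
    (motive := fun T _ => ∀ h, ∃ h' ∈ Approx I k h, ∀ i ∈ T, Q i h') S hS
    (fun h => ⟨h, self_mem_approx k h, fun _ hi => hi.elim⟩) ?_ h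
  intro i T hiS hTS _ ih h
  obtain ⟨h₁, hh₁, hT⟩ := ih h
  obtain ⟨h₂, hh₂, hi⟩ := hdense i hiS h₁
  refine ⟨h₂, approx_subset_of_mem hh₁ hh₂, ?_⟩
  rintro j (rfl | hj)
  exacts [hi, hmono j (hTS hj) h₁ (hT j hj) h₂ hh₂]

/-- Fusion: at stage `k` the finitely many requirements of level `k` are met by changing the
sequence only from position `k` on, which keeps the values of the stems below `k`; the diagonal of
the resulting sequences meets all of them. -/
theorem exists_seqReduction_forall_stems {ι : Type*} (S : ℕ → Set ι) (hS : ∀ k, (S k).Finite)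
    (ρ : ι → List (Tm F)) (hρ : ∀ k, ∀ i ∈ S k, ∀ t ∈ ρ i, ∀ v ∈ t.varList, v < k)
    (R : ι → List A → (ℕ → A) → Prop)
    (hmono : ∀ i x r r', R i x r → SeqReduction I r' r → R i x r')
    (hdense : ∀ i x r, ∃ r', SeqReduction I r' r ∧ R i x r') (a : ℕ → A) :
    ∃ b, SeqReduction I b a ∧ ∀ k, ∀ i ∈ S k, R i ((ρ i).map (·.realize I b)) (seqDrop k b) := by
  have hstem : ∀ k, ∀ i ∈ S k, ∀ h, ∀ h' ∈ Approx I k h,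
      (ρ i).map (·.realize I h') = (ρ i).map (·.realize I h) := fun k i hi _ _ hh' =>
    List.map_congr_left fun t ht => realize_eq_of_mem_approx hh' (hρ k i hi t ht)
  have hQmono : ∀ k, ∀ i ∈ S k, ∀ h, R i ((ρ i).map (·.realize I h)) (seqDrop k h) →
      ∀ h' ∈ Approx I k h, R i ((ρ i).map (·.realize I h')) (seqDrop k h') :=
    fun k i hi h hR h' hh' => by
      rw [hstem k i hi h h' hh']
      exact hmono _ _ _ _ hR (mem_approx_iff.1 hh').2
  refine exists_seqReduction_forall_of_dense _ (fun k h hP h' hh' i hi => hQmono k i hi h (hP i hi)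
    h' hh') (fun k => exists_mem_approx_forall_of_finite (hS k) (hQmono k) fun i hi h => ?_) a
  obtain ⟨r, hr, hR⟩ := hdense i ((ρ i).map (·.realize I h)) (seqDrop k h)
  refine ⟨_, seqAppend_mem_approx hr, ?_⟩
  rwa [hstem k i hi _ _ (seqAppend_mem_approx hr), seqDrop_seqAppend_range]

end Fusion

section Finiteness

open Tm

variable {F : ℕ → Type u}

def termsBelow (k : ℕ) : Set (Tm F) := {t | t.Orderly ∧ ∀ v ∈ t.varList, v < k}

def stemsBelow (k : ℕ) : Set (List (Tm F)) := {ρ | ρ.length ≤ k ∧ ∀ t ∈ ρ, t ∈ termsBelow k}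

variable [IsEmpty (F 0)]

theorem Tm.Admissible.map_range_mem_stemsBelow {τ : ℕ → Tm F} (hτ : Admissible τ) (q : ℕ) :
    (List.range q).map τ ∈ stemsBelow (τ q).firstVar := by
  refine ⟨by simpa using hτ.le (firstVar_mem (τ q)), fun t ht => ?_⟩
  obtain ⟨i, hi, rfl⟩ := List.mem_map.1 ht
  exact ⟨hτ.1 i, fun v hv => hτ.lt (List.mem_range.1 hi) hv (firstVar_mem _)⟩

/-- Without unary symbols every symbol has at least two arguments, each with a variable. -/
theorem length_varList_lt_func [IsEmpty (F 1)] {m : ℕ} (f : F m) (ts : Fin m → Tm F) (j : Fin m) :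
    (ts j).varList.length < (Tm.func f ts).varList.length := by
  have hm : 1 < m := by
    rcases m with _ | _ | m
    exacts [j.elim0, isEmptyElim f, by omega]
  obtain ⟨j', hj'⟩ := Fintype.exists_ne_of_one_lt_card (by simpa using hm) j
  have hpos := List.length_pos_iff.2 (varList_ne_nil (ts j'))
  calc (ts j).varList.length < (ts j).varList.length + (ts j').varList.length := by omega
    _ = ∑ i ∈ {j, j'}, (ts i).varList.length :=
      (Finset.sum_pair (f := fun i => (ts i).varList.length) hj'.symm).symm
    _ ≤ ∑ i, (ts i).varList.length := Finset.sum_le_sum_of_subset (Finset.subset_univ _)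
    _ = (Tm.func f ts).varList.length := by simp [varList, List.length_flatMap, Fin.sum_univ_def]

theorem finite_length_varList_le [IsEmpty (F 1)] [Finite (Σ n, F n)] (n k : ℕ) :
    {t : Tm F | t.varList.length ≤ n ∧ ∀ v ∈ t.varList, v < k}.Finite := by
  induction n with
  | zero =>
    refine Set.finite_empty.subset fun t ht => varList_ne_nil t ?_
    exact List.length_eq_zero_iff.1 (Nat.le_zero.1 ht.1)
  | succ n ih =>
    refine (((Set.finite_Iio k).image Tm.var).union (Set.finite_iUnion fun p : Σ m, F m =>
      (Set.Finite.pi (t := fun _ : Fin p.1 => _) fun _ => ih).image (Tm.func p.2))).subset ?_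
    rintro (i | ⟨f, ts⟩) ⟨hlen, hk⟩
    · exact Or.inl ⟨i, hk i (List.mem_singleton_self i), rfl⟩
    · refine Or.inr (Set.mem_iUnion.2 ⟨⟨_, f⟩, ts, fun j _ => ⟨?_, fun v hv => hk v ?_⟩, rfl⟩)
      · have := length_varList_lt_func f ts j
        omega
      · exact List.mem_flatMap_of_mem (List.mem_finRange j) hv

theorem finite_termsBelow [IsEmpty (F 1)] [Finite (Σ n, F n)] (k : ℕ) :
    (termsBelow (F := F) k).Finite :=
  (finite_length_varList_le k k).subset fun _ ht =>
    ⟨length_le_of_pairwise_lt (orderly_iff_pairwise.1 ht.1) ht.2, ht.2⟩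

theorem finite_stemsBelow [IsEmpty (F 1)] [Finite (Σ n, F n)] (k : ℕ) :
    (stemsBelow (F := F) k).Finite := by
  have := (finite_termsBelow (F := F) k).to_subtype
  refine ((List.finite_length_le (termsBelow k) k).image (List.map Subtype.val)).subset ?_
  rintro ρ ⟨hlen, hρ⟩
  lift ρ to List (termsBelow (F := F) k) using hρ
  exact ⟨ρ, by simpa using hlen, rfl⟩

end Finiteness

section Forcing

open Tm

variable {F : ℕ → Type u} {A : Type v} [IsEmpty (F 0)] {I : ∀ n, F n → (Fin n → A) → A}
  {U : Set (ℕ → A)}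

variable (I U) in
def Accepts (s : List A) (r : ℕ → A) : Prop := stemSet I s r ⊆ U

variable (I U) in
def Rejects (s : List A) (r : ℕ → A) : Prop := ∀ r', SeqReduction I r' r → ¬Accepts I U s r'

variable (I U) in
def RejectsExtensions (s : List A) (r : ℕ → A) : Prop :=
  ∀ t : Tm F, t.Orderly → Rejects I U (s ++ [t.realize I r]) (seqDrop (t.lastVar + 1) r)

theorem Accepts.mono {s : List A} {r r' : ℕ → A} (h : Accepts I U s r)
    (hr : SeqReduction I r' r) : Accepts I U s r' :=
  (stemSet_mono hr).trans h

theorem Rejects.mono {s : List A} {r r' : ℕ → A} (h : Rejects I U s r)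
    (hr : SeqReduction I r' r) : Rejects I U s r' :=
  fun r'' hr'' => h r'' (hr''.trans hr)

theorem Rejects.not_accepts {s : List A} {r : ℕ → A} (h : Rejects I U s r) : ¬Accepts I U s r :=
  h r (.refl I r)

theorem Rejects.not_accepts_seqDrop {s : List A} {h : ℕ → A} {k N : ℕ}
    (hR : Rejects I U s (seqDrop k h)) : ¬Accepts I U s (seqDrop N h) := fun hA =>
  hR _ (seqReduction_seqDrop_of_le h (le_max_left k N))
    (hA.mono (seqReduction_seqDrop_of_le h (le_max_right k N)))

theorem exists_accepts_or_rejects (s : List A) (r : ℕ → A) :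
    ∃ r', SeqReduction I r' r ∧ (Accepts I U s r' ∨ Rejects I U s r') := by
  by_cases h : ∃ r', SeqReduction I r' r ∧ Accepts I U s r'
  · obtain ⟨r', hr', hA⟩ := h
    exact ⟨r', hr', Or.inl hA⟩
  · simp only [not_exists, not_and] at h
    exact ⟨r, .refl I r, Or.inr h⟩

theorem RejectsExtensions.mono {s : List A} {r r' : ℕ → A} (h : RejectsExtensions I U s r)
    (hr : SeqReduction I r' r) : RejectsExtensions I U s r' := by
  obtain ⟨σ, hσ, hr'⟩ := hr
  intro t ht
  rw [← realize_subst_eq I hr']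
  exact (h _ (hσ.orderly_subst ht)).mono (seqReduction_seqDrop_lastVar_subst hσ hr' ht)

theorem accepts_of_forall_mem_FR {s : List A} {b h : ℕ → A}
    (hdec : ∀ k, ∀ t ∈ termsBelow k, Accepts I U (s ++ [t.realize I h]) (seqDrop k h) ∨
      Rejects I U (s ++ [t.realize I h]) (seqDrop k h))
    (hb : SeqReduction I b h) (hX : ∀ x ∈ FR I b, ∃ N, Accepts I U (s ++ [x]) (seqDrop N h)) :
    Accepts I U s b := by
  rintro c ⟨hcs, τ, hτ, hd⟩
  obtain ⟨σ, hσ, hbσ⟩ := hb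
  have hπ := hτ.subst hσ
  have hdπ : ∀ i, seqDrop s.length c i = ((τ i).subst σ).realize I h :=
    fun i => (hd i).trans (realize_subst_eq I hbσ _).symm
  obtain ⟨N, hN⟩ := hX _ ⟨τ 0, hτ.1 0, hd 0⟩
  have hk : (τ 0).subst σ ∈ termsBelow ((τ 1).subst σ).firstVar :=
    ⟨hπ.1 0, fun v hv => hπ.lt one_pos hv (firstVar_mem _)⟩
  have hacc := (hdec _ _ hk).resolve_right fun hR => hR.not_accepts_seqDrop (hdπ 0 ▸ hN)
  rw [← hdπ 0] at hacc
  refine hacc (stemSet_mono (seqReduction_seqDrop_firstVar hπ hdπ 1) ?_)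
  simpa using mem_stemSet_append_range hcs 1

theorem rejectsExtensions_of_forall_mem_FR {s : List A} {b h : ℕ → A}
    (hdec : ∀ k, ∀ t ∈ termsBelow k, Accepts I U (s ++ [t.realize I h]) (seqDrop k h) ∨
      Rejects I U (s ++ [t.realize I h]) (seqDrop k h))
    (hb : SeqReduction I b h) (hX : ∀ x ∈ FR I b, ∀ N, ¬Accepts I U (s ++ [x]) (seqDrop N h)) :
    RejectsExtensions I U s b := by
  obtain ⟨σ, hσ, hbσ⟩ := hb
  intro t ht
  have ht' := hσ.orderly_subst ht
  have hk : t.subst σ ∈ termsBelow ((t.subst σ).lastVar + 1) :=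
    ⟨ht', fun v hv => Nat.lt_succ_of_le (le_lastVar ht' hv)⟩
  have hR := (hdec _ _ hk).resolve_left (by rw [realize_subst_eq I hbσ]; exact hX _ ⟨t, ht, rfl⟩ _)
  rw [realize_subst_eq I hbσ] at hR
  exact hR.mono (seqReduction_seqDrop_lastVar_subst hσ hbσ ht)

/-- Once every one-term extension of `s` has been decided along a fusion sequence, the Ramsey
algebra property separates the finite reductions whose extensions are accepted from the others. -/
theorem exists_accepts_or_rejectsExtensions [IsEmpty (F 1)] [Finite (Σ n, F n)]
    (hRA : RamseyAlg I) (s : List A) (r : ℕ → A) :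
    ∃ r', SeqReduction I r' r ∧ (Accepts I U s r' ∨ RejectsExtensions I U s r') := by
  obtain ⟨h, hhr, hdec⟩ := exists_seqReduction_forall_stems termsBelow finite_termsBelow
    (fun t => [t]) (fun k t ht t' ht' => List.mem_singleton.1 ht' ▸ ht.2)
    (fun _ x r => Accepts I U (s ++ x) r ∨ Rejects I U (s ++ x) r)
    (fun _ _ _ _ h hr => h.imp (·.mono hr) (·.mono hr))
    (fun _ x r => exists_accepts_or_rejects (s ++ x) r) r
  obtain ⟨b, hbh, hhom⟩ := hRA h {x | ∃ N, Accepts I U (s ++ [x]) (seqDrop N h)}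
  refine ⟨b, hbh.trans hhr, hhom.imp (fun hsub => accepts_of_forall_mem_FR hdec hbh hsub)
    fun hdisj => rejectsExtensions_of_forall_mem_FR hdec hbh fun x hx N hA => ?_⟩
  exact (Set.eq_empty_iff_forall_notMem.1 hdisj x) ⟨hx, N, hA⟩

theorem rejects_append_range {s : List A} {h d : ℕ → A} (hrej : Rejects I U s h)
    (hP : ∀ k, ∀ ρ ∈ stemsBelow k,
      Accepts I U (s ++ ρ.map (·.realize I h)) (seqDrop k h) ∨
      RejectsExtensions I U (s ++ ρ.map (·.realize I h)) (seqDrop k h))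
    {τ : ℕ → Tm F} (hτ : Admissible τ) (hd : ∀ j, d j = (τ j).realize I h) :
    ∀ q, Rejects I U (s ++ (List.range q).map d) (seqDrop (τ q).firstVar h)
  | 0 => by simpa using hrej.mono (seqReduction_seqDrop_of_le h (Nat.zero_le _))
  | q + 1 => by
    have ih := rejects_append_range hrej hP hτ hd q
    rcases hP _ _ (hτ.map_range_mem_stemsBelow q) with hA | hE
    · rw [map_realize_range_map hd] at hA
      exact absurd hA ih.not_accepts
    have hk : ∀ v ∈ (τ q).varList, (τ q).firstVar ≤ v := fun v hv => firstVar_le (hτ.1 q) hv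
    have hR := hE ((τ q).lower _) (orderly_lower (hτ.1 q) hk)
    rw [realize_lower I hk, seqDrop_seqDrop, lastVar_lower, ← hd, map_realize_range_map hd] at hR
    rw [List.range_succ, List.map_append, List.map_singleton, ← List.append_assoc]
    refine hR.mono (seqReduction_seqDrop_of_le h ?_)
    have := hk _ (lastVar_mem _)
    have := hτ.lt q.lt_succ_self (lastVar_mem _) (firstVar_mem (τ (q + 1)))
    omega

/-- Galvin–Prikry for open sets. -/
theorem exists_stemSet_subset_or_disjoint [IsEmpty (F 1)] [Finite (Σ n, F n)]
    (hRA : RamseyAlg I) (hU : ∀ c ∈ U, ∃ m, Approx I m c ⊆ U) (s : List A) (r : ℕ → A) :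
    ∃ r', SeqReduction I r' r ∧ (stemSet I s r' ⊆ U ∨ Disjoint (stemSet I s r') U) := by
  obtain ⟨r₀, hr₀, hA | hrej⟩ := exists_accepts_or_rejects (I := I) (U := U) s r
  · exact ⟨r₀, hr₀, Or.inl hA⟩
  obtain ⟨h, hhr, hP⟩ := exists_seqReduction_forall_stems stemsBelow finite_stemsBelow id
    (fun k ρ hρ t ht => (hρ.2 t ht).2)
    (fun _ x r => Accepts I U (s ++ x) r ∨ RejectsExtensions I U (s ++ x) r)
    (fun _ _ _ _ h hr => h.imp (·.mono hr) (·.mono hr))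
    (fun _ x r => exists_accepts_or_rejectsExtensions hRA (s ++ x) r) r₀
  refine ⟨h, hhr.trans hr₀, Or.inr (Set.disjoint_left.2 ?_)⟩
  rintro c ⟨hcs, τ, hτ, hd⟩ hcU
  obtain ⟨m, hm⟩ := hU c hcU
  refine rejects_append_range (hrej.mono hhr) hP hτ hd m _
    (seqReduction_seqDrop_firstVar hτ hd m) ?_
  show stemSet I _ _ ⊆ U
  rw [stemSet_append_eq_approx hcs]
  exact (approx_subset_approx (Nat.le_add_left m _) c).trans hm

end Forcing

theorem IsMeagre.exists_iInter_subset_compl {X : Type*} [TopologicalSpace X] {M : Set X}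
    (hM : IsMeagre M) :
    ∃ V : ℕ → Set X, (∀ j, IsOpen (V j)) ∧ (∀ j, Dense (V j)) ∧ ⋂ j, V j ⊆ Mᶜ := by
  obtain ⟨S, hSo, hSd, hSc, hS⟩ := mem_residual_iff.1 hM
  obtain ⟨V, hV⟩ := (hSc.insert Set.univ).exists_eq_range (Set.insert_nonempty _ _)
  have hVS : ∀ j, V j ∈ insert Set.univ S := fun j => hV ▸ Set.mem_range_self j
  refine ⟨V, fun j => ?_, fun j => ?_, fun x hx => hS fun t ht => ?_⟩
  · rcases hVS j with h | h
    exacts [h ▸ isOpen_univ, hSo _ h]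
  · rcases hVS j with h | h
    exacts [h ▸ dense_univ, hSd _ h]
  · obtain ⟨j, rfl⟩ : t ∈ Set.range V := hV ▸ Set.mem_insert_of_mem Set.univ ht
    exact Set.mem_iInter.1 hx j

section Topology

open Tm Topology

variable {F : ℕ → Type u} {A : Type v} {I : ∀ n, F n → (Fin n → A) → A}

theorem isOpen_approx (n : ℕ) (a : ℕ → A) : IsOpen[natTop I] (Approx I n a) :=
  TopologicalSpace.isOpen_generateFrom_of_mem ⟨n, a, rfl⟩

variable [IsEmpty (F 0)]

theorem isOpen_natTop_iff {V : Set (ℕ → A)} :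
    IsOpen[natTop I] V ↔ ∀ c ∈ V, ∃ m, Approx I m c ⊆ V := by
  refine ⟨fun hV => ?_, fun hV => ?_⟩
  · induction hV with
    | basic S hS =>
      obtain ⟨n, a, rfl⟩ := hS
      exact fun c hc => ⟨n, approx_subset_of_mem hc⟩
    | univ => exact fun _ _ => ⟨0, Set.subset_univ _⟩
    | inter V W _ _ hV hW =>
      intro c hc
      obtain ⟨m, hm⟩ := hV c hc.1
      obtain ⟨n, hn⟩ := hW c hc.2
      exact ⟨max m n, Set.subset_inter ((approx_subset_approx (le_max_left m n) c).trans hm)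
        ((approx_subset_approx (le_max_right m n) c).trans hn)⟩
    | sUnion S _ hS =>
      rintro c ⟨W, hW, hc⟩
      obtain ⟨m, hm⟩ := hS W hW c hc
      exact ⟨m, hm.trans (Set.subset_sUnion_of_mem hW)⟩
  · refine (@isOpen_iff_forall_mem_open _ (natTop I) V).2 fun c hc => ?_
    obtain ⟨m, hm⟩ := hV c hc
    exact ⟨_, hm, isOpen_approx m c, self_mem_approx m c⟩

theorem ramseySet_of_forall_stemSet {X : Set (ℕ → A)}
    (hX : ∀ s r, ∃ r', SeqReduction I r' r ∧ (stemSet I s r' ⊆ X ∨ Disjoint (stemSet I s r') X)) :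
    RamseySet I X := by
  intro n a
  obtain ⟨r, hr, hrX⟩ := hX ((List.range n).map a) (seqDrop n a)
  refine ⟨_, seqAppend_mem_approx hr, ?_⟩
  rw [← Set.disjoint_iff_inter_eq_empty]
  simpa [stemSet_eq_approx] using hrX

theorem exists_seqReduction_apply_zero_eq {b : ℕ → A} {x : A} (hx : x ∈ FR I b) :
    ∃ c, SeqReduction I c b ∧ c 0 = x := by
  obtain ⟨t, ht, rfl⟩ := hx
  refine ⟨fun i => if i = 0 then t.realize I b else b (i + t.lastVar),
    ⟨fun i => if i = 0 then t else .var (i + t.lastVar), ⟨fun i => ?_, fun i => ?_⟩,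
      fun i => by dsimp only; split_ifs <;> rfl⟩, rfl⟩
  · dsimp only
    split_ifs
    exacts [ht, orderly_var _]
  · refine termLT_of_forall_lt fun x hx y hy => ?_
    simp only [Nat.add_one_ne_zero, if_false, varList, List.mem_singleton] at hy
    dsimp only at hx
    split_ifs at hx with hi
    · have := le_lastVar ht hx
      omega
    · simp only [varList, List.mem_singleton] at hx
      omega

theorem ramseyAlg_of_forall_ramseySet
    (h : ∀ X : Set (ℕ → A), HasBaireProperty I X → RamseySet I X) : RamseyAlg I := by
  intro a X
  let Y : Set (ℕ → A) := {c | c 0 ∈ X}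
  have hY : IsOpen[natTop I] Y :=
    isOpen_natTop_iff.2 fun c hc => ⟨1, fun b hb => by simpa [Y, hb.2 0 one_pos] using hc⟩
  obtain ⟨b, hb, hbY⟩ := h Y ⟨Y, hY, by rw [symmDiff_self]; exact @IsMeagre.empty _ (natTop I)⟩ 0 a
  have hFR : ∀ x ∈ FR I b, ∃ c ∈ Approx I 0 b, c 0 = x := fun x hx => by
    obtain ⟨c, hc, rfl⟩ := exists_seqReduction_apply_zero_eq hx
    exact ⟨c, ⟨hc, fun _ hi => absurd hi (Nat.not_lt_zero _)⟩, rfl⟩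
  refine ⟨b, hb.1, hbY.imp (fun hsub x hx => ?_) fun hdisj => ?_⟩
  · obtain ⟨c, hc, rfl⟩ := hFR x hx
    exact hsub hc
  · refine Set.eq_empty_iff_forall_notMem.2 fun x ⟨hx, hxX⟩ => ?_
    obtain ⟨c, hc, rfl⟩ := hFR x hx
    exact Set.eq_empty_iff_forall_notMem.1 hdisj c ⟨hc, hxX⟩

variable [IsEmpty (F 1)] [Finite (Σ n, F n)]

theorem exists_stemSet_subset_of_dense (hRA : RamseyAlg I) {V : Set (ℕ → A)}
    (hVo : IsOpen[natTop I] V) (hVd : @Dense _ (natTop I) V) (s : List A) (r : ℕ → A) :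
    ∃ r', SeqReduction I r' r ∧ stemSet I s r' ⊆ V := by
  obtain ⟨r', hr', hsub | hdisj⟩ :=
    exists_stemSet_subset_or_disjoint hRA (isOpen_natTop_iff.1 hVo) s r
  · exact ⟨r', hr', hsub⟩
  have hopen : IsOpen[natTop I] (stemSet I s r') := by
    rw [stemSet_eq_approx]
    exact isOpen_approx _ _
  obtain ⟨x, hxs, hxV⟩ := @Dense.inter_open_nonempty _ (natTop I) V hVd _ hopen
    ⟨_, seqAppend_mem_stemSet s r'⟩
  exact (Set.disjoint_left.1 hdisj hxs hxV).elim

theorem exists_stemSet_subset_iInter (hRA : RamseyAlg I) {V : ℕ → Set (ℕ → A)}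
    (hVo : ∀ j, IsOpen[natTop I] (V j)) (hVd : ∀ j, @Dense _ (natTop I) (V j)) (s : List A)
    (r : ℕ → A) : ∃ r', SeqReduction I r' r ∧ stemSet I s r' ⊆ ⋂ j, V j := by
  obtain ⟨h, hhr, hP⟩ := exists_seqReduction_forall_stems (fun k => stemsBelow k ×ˢ Set.Iio k)
    (fun k => (finite_stemsBelow k).prod (Set.finite_Iio k)) Prod.fst
    (fun _ _ hi t ht => (hi.1.2 t ht).2) (fun i x r => stemSet I (s ++ x) r ⊆ V i.2)
    (fun _ _ _ _ h hr => (stemSet_mono hr).trans h)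
    (fun i x r => exists_stemSet_subset_of_dense hRA (hVo i.2) (hVd i.2) (s ++ x) r) r
  refine ⟨h, hhr, fun c ⟨hcs, τ, hτ, hd⟩ => Set.mem_iInter.2 fun j => ?_⟩
  have hj := hP _ ((List.range (j + 1)).map τ, j)
    ⟨hτ.map_range_mem_stemsBelow (j + 1), hτ.le (firstVar_mem _)⟩
  rw [map_realize_range_map hd] at hj
  exact hj (stemSet_mono (seqReduction_seqDrop_firstVar hτ hd (j + 1))
    (mem_stemSet_append_range hcs (j + 1)))

theorem ramseySet_of_hasBaireProperty (hRA : RamseyAlg I) {X : Set (ℕ → A)}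
    (hX : HasBaireProperty I X) : RamseySet I X := by
  obtain ⟨W, hWo, hM⟩ := hX
  obtain ⟨V, hVo, hVd, hVM⟩ := @IsMeagre.exists_iInter_subset_compl _ (natTop I) _ hM
  refine ramseySet_of_forall_stemSet fun s r => ?_
  obtain ⟨r₁, hr₁, h₁⟩ := exists_stemSet_subset_iInter hRA hVo hVd s r
  obtain ⟨r₂, hr₂, h₂⟩ := exists_stemSet_subset_or_disjoint hRA (isOpen_natTop_iff.1 hWo) s r₁
  have hXW : ∀ c ∈ stemSet I s r₂, c ∈ X ↔ c ∈ W := fun c hc => by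
    have := hVM (h₁ (stemSet_mono hr₂ hc))
    rw [Set.mem_compl_iff, Set.mem_symmDiff] at this
    tauto
  refine ⟨r₂, hr₂.trans hr₁, h₂.imp (fun hW c hc => (hXW c hc).2 (hW hc)) fun hW => ?_⟩
  exact Set.disjoint_left.2 fun c hc hcX => Set.disjoint_left.1 hW hc ((hXW c hc).1 hcX)

end Topology

/-- For a purely functional language with no nullary and no
unary function symbols and finitely many function symbols in total, the
preorder with approximations `(ᵂA, ≤)` with its natural topology is a Ramsey
space (every subset with the property of Baire is Ramsey) iff `(A, I)` is a
Ramsey algebra. -/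
theorem ramsey_space_iff_ramsey_algebra {F : ℕ → Type u} {A : Type v}
    [IsEmpty (F 0)] [IsEmpty (F 1)] [Finite (Σ n, F n)]
    (I : ∀ n, F n → (Fin n → A) → A) :
    (∀ X : Set (ℕ → A), HasBaireProperty I X → RamseySet I X) ↔ RamseyAlg I :=
  ⟨ramseyAlg_of_forall_ramseySet, fun hRA _ => ramseySet_of_hasBaireProperty hRA⟩
end

section
/- Every semigroup is a Ramsey algebra: if (S, ·) is a semigroup, regarded as a structure for the language with a single binary function symbol interpreted as the multiplication ·, then for every sequence a : ℕ → S and every X ⊆ S there exists a reduction b ≤ a such that FR(b) ⊆ X or FR(b) ∩ X = ∅. -/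
open Function Set

universe u v w

/-!
By associativity the value of an orderly term depends only on its list of variables, so the finite
reductions of `b` are exactly Hindman's finite products `FP b`, and a reduction of `a` is a sequence
of products of successive disjoint blocks of `a`. To keep track of the blocks we work in the
semigroup of triples `(m, M, x)`, a product `x` of terms of `a` with indices in `[m, M]`, where
`(m, M, x) (m', M', y) = (m, M', x y)` if `M < m'` and is an absorbing `0` otherwise. The strong form
of Hindman's theorem, applied to `FP` of the blocks `(n, n, a n)` coloured by whether the product
lies in `X`, yields a sequence of blocks all of whose finite products have the same colour. Since
none of these products is `0`, the blocks come in order and so form a reduction of `a`.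
-/

namespace Tm

@[elab_as_elim]
theorem induction_on_fapp {motive : Tm BinF → Prop} (var : ∀ i, motive (.var i))
    (app : ∀ s t, motive s → motive t → motive (fapp s t)) (t : Tm BinF) : motive t := by
  induction t with
  | var i => exact var i
  | func g ts ih =>
    cases g
    have hts : ts = ![ts 0, ts 1] := by ext k; fin_cases k <;> rfl
    rw [hts]
    exact app _ _ (ih 0) (ih 1)

theorem orderly_iff {F : ℕ → Type u} (t : Tm F) : t.Orderly ↔ t.varList.IsChain (· < ·) := Iff.rfl

theorem varList_fapp (s t : Tm BinF) : (fapp s t).varList = s.varList ++ t.varList := by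
  simp [fapp, varList, List.finRange_succ]

theorem realize_fapp {A : Type v} (g : A → A → A) (b : ℕ → A) (s t : Tm BinF) :
    (fapp s t).realize (binI g) b = g (s.realize (binI g) b) (t.realize (binI g) b) :=
  rfl

end Tm

section ListProd

variable {S : Type v} [Semigroup S]

def listProd (c : ℕ → S) : ℕ → List ℕ → S
  | i, [] => c i
  | i, j :: l => c i * listProd c j l

theorem listProd_append (c : ℕ → S) (i j : ℕ) (l l' : List ℕ) :
    listProd c i (l ++ j :: l') = listProd c i l * listProd c j l' := by
  induction l generalizing i with
  | nil => rfl
  | cons k l ih => rw [List.cons_append, listProd, ih, listProd, mul_assoc]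

theorem Tm.exists_realize_eq_listProd (c : ℕ → S) (t : Tm BinF) :
    ∃ i l, t.varList = i :: l ∧ t.realize (binI (· * ·)) c = listProd c i l := by
  induction t using Tm.induction_on_fapp with
  | var i => exact ⟨i, [], rfl, rfl⟩
  | app s t hs ht =>
    obtain ⟨i, l, hsl, hsc⟩ := hs
    obtain ⟨j, l', htl, htc⟩ := ht
    refine ⟨i, l ++ j :: l', ?_, ?_⟩
    · rw [Tm.varList_fapp, hsl, htl, List.cons_append]
    · rw [Tm.realize_fapp, hsc, htc, listProd_append]

open Hindman in
theorem listProd_mem_FP_drop (c : Stream' S) {i : ℕ} {l : List ℕ}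
    (hl : (i :: l).IsChain (· < ·)) : listProd c i l ∈ FP (c.drop i) := by
  induction l generalizing i with
  | nil =>
    show c.get i ∈ _
    rw [← Stream'.head_drop]
    exact FP.head _
  | cons j l ih =>
    rw [List.isChain_cons_cons] at hl
    obtain ⟨d, rfl⟩ := Nat.exists_eq_add_of_lt hl.1
    have hdrop : FP (c.drop (i + d + 1)) ⊆ FP (c.drop i).tail := by
      rw [Stream'.tail_drop', add_right_comm, ← Stream'.drop_drop]
      exact FP_drop_subset_FP _ _
    show c.get i * _ ∈ _
    rw [← Stream'.head_drop]
    exact FP.cons _ _ (hdrop (ih hl.2))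

open Hindman in
theorem FR_subset_FP (c : Stream' S) : FR (binI (· * ·)) c ⊆ FP c := by
  rintro _ ⟨t, ht, rfl⟩
  obtain ⟨i, l, hl, hc⟩ := t.exists_realize_eq_listProd c
  rw [Tm.orderly_iff, hl] at ht
  rw [hc]
  exact FP_drop_subset_FP c i (listProd_mem_FP_drop c ht)

end ListProd

inductive Block (S : Type v)
  | zero
  | mk (first last : ℕ) (val : S)

namespace Block

variable {S : Type v} [Semigroup S]

instance : Mul (Block S) where
  mul
    | mk m M x, mk m' M' y => if M < m' then mk m M' (x * y) else zero
    | _, _ => zero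

theorem mk_mul_mk (m M m' M' : ℕ) (x y : S) :
    mk m M x * mk m' M' y = if M < m' then mk m M' (x * y) else zero :=
  rfl

@[simp]
theorem zero_mul (p : Block S) : zero * p = zero := rfl

@[simp]
theorem mul_zero (p : Block S) : p * zero = zero := by cases p <;> rfl

instance : Semigroup (Block S) where
  mul_assoc p q r := by
    rcases p with _ | ⟨m₁, M₁, x⟩ <;> rcases q with _ | ⟨m₂, M₂, y⟩ <;>
      rcases r with _ | ⟨m₃, M₃, z⟩ <;> simp only [zero_mul, mul_zero, mk_mul_mk]
    split_ifs <;> simp_all [mk_mul_mk, _root_.mul_assoc]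

theorem lt_of_mk_mul_mk_ne_zero {m M m' M' : ℕ} {x y : S}
    (h : mk m M x * mk m' M' y ≠ zero) : M < m' := by
  by_contra hlt
  exact h (if_neg hlt)

theorem eq_mk_of_mul_eq_mk {p q : Block S} {m M : ℕ} {x : S} (h : p * q = mk m M x) :
    ∃ M' m' y z, p = mk m M' y ∧ q = mk m' M z ∧ x = y * z := by
  rcases p with _ | ⟨m₁, M₁, y⟩ <;> rcases q with _ | ⟨m₂, M₂, z⟩ <;> try cases h
  rw [mk_mul_mk] at h
  split_ifs at h
  cases h
  exact ⟨M₁, m₂, y, z, rfl, rfl, rfl⟩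

end Block

section Blocks

open Hindman

variable {S : Type v} [Semigroup S]

def blockSeq (a : ℕ → S) : Stream' (Block S) := fun n => .mk n n (a n)

def SpansBlock (a : ℕ → S) (t : Tm BinF) (p : Block S) : Prop :=
  t.Orderly ∧ ∃ m M, t.varList.head? = some m ∧ t.varList.getLast? = some M ∧
    p = .mk m M (t.realize (binI (· * ·)) a)

def blocksIn (a : ℕ → S) (P : Set S) : Set (Block S) :=
  { p | ∃ t, SpansBlock a t p ∧ t.realize (binI (· * ·)) a ∈ P }

theorem spansBlock_var (a : ℕ → S) (k : ℕ) : SpansBlock a (.var k) (blockSeq a k) :=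
  ⟨List.isChain_singleton k, k, k, rfl, rfl, rfl⟩

theorem SpansBlock.var_fapp {a : ℕ → S} {t : Tm BinF} {p : Block S} (ht : SpansBlock a t p)
    {k : ℕ} (hk : ∀ i ∈ t.varList, k < i) :
    SpansBlock a (fapp (.var k) t) (blockSeq a k * p) := by
  obtain ⟨hord, m, M, hm, hM, rfl⟩ := ht
  have hkm : k < m := hk m (List.mem_of_mem_head? hm)
  have hvar : (fapp (.var k) t).varList = k :: t.varList := Tm.varList_fapp _ _
  refine ⟨?_, k, M, by rw [hvar]; rfl, by rw [hvar, List.getLast?_cons, hM]; rfl, ?_⟩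
  · rw [Tm.orderly_iff, hvar, List.isChain_cons]
    exact ⟨by simpa [hm] using hkm, hord⟩
  · rw [blockSeq, Block.mk_mul_mk, if_pos hkm]
    rfl

theorem exists_spansBlock_of_mem_FP_drop (a : ℕ → S) {k : ℕ} {p : Block S}
    (hp : p ∈ FP ((blockSeq a).drop k)) :
    ∃ t, SpansBlock a t p ∧ ∀ i ∈ t.varList, k ≤ i := by
  generalize hc : (blockSeq a).drop k = c at hp
  induction hp generalizing k with
  | head' c =>
    subst hc
    rw [Stream'.head_drop]
    exact ⟨.var k, spansBlock_var a k, by simp [Tm.varList]⟩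
  | tail' c p _ ih =>
    obtain ⟨t, ht, hk⟩ := ih (k := k + 1) (by rw [← hc, Stream'.tail_drop'])
    exact ⟨t, ht, fun i hi => Nat.le_of_succ_le (hk i hi)⟩
  | cons' c p _ ih =>
    obtain ⟨t, ht, hk⟩ := ih (k := k + 1) (by rw [← hc, Stream'.tail_drop'])
    subst hc
    rw [Stream'.head_drop]
    refine ⟨fapp (.var k) t, ht.var_fapp hk, ?_⟩
    rw [Tm.varList_fapp]
    rintro i (_ | ⟨_, hi⟩)
    exacts [le_rfl, Nat.le_of_succ_le (hk i hi)]

theorem FP_blockSeq_subset_union (a : ℕ → S) (X : Set S) :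
    FP (blockSeq a) ⊆ blocksIn a X ∪ blocksIn a Xᶜ := by
  intro p hp
  obtain ⟨t, ht, -⟩ := exists_spansBlock_of_mem_FP_drop a (k := 0) hp
  by_cases hX : t.realize (binI (· * ·)) a ∈ X
  exacts [Or.inl ⟨t, ht, hX⟩, Or.inr ⟨t, ht, hX⟩]

theorem val_eq_realize_of_realize_eq_mk {β : ℕ → Block S} {b : ℕ → S}
    (hβ : ∀ n, ∃ m M, β n = .mk m M (b n)) (t : Tm BinF) {m M : ℕ} {x : S}
    (h : t.realize (binI (· * ·)) β = .mk m M x) : x = t.realize (binI (· * ·)) b := by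
  induction t using Tm.induction_on_fapp generalizing m M x with
  | var i =>
    obtain ⟨m', M', hi⟩ := hβ i
    change β i = _ at h
    rw [hi] at h
    cases h
    rfl
  | app s u hs hu =>
    rw [Tm.realize_fapp] at h
    obtain ⟨M', m', y, z, hy, hz, rfl⟩ := Block.eq_mk_of_mul_eq_mk h
    rw [Tm.realize_fapp, hs hy, hu hz]

theorem exists_reduction_FR_subset_of_FP_subset {a : ℕ → S} {P : Set S} {β : Stream' (Block S)}
    (hβ : FP β ⊆ blocksIn a P) :
    ∃ b, SeqReduction (binI (· * ·)) b a ∧ FR (binI (· * ·)) b ⊆ P := by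
  choose t ht using fun n => hβ (FP.singleton β n)
  choose hord m M hm hM hβt using fun n => (ht n).1
  refine ⟨fun n => (t n).realize (binI (· * ·)) a,
    ⟨t, ⟨hord, fun n => ⟨M n, m (n + 1), hM n, hm (n + 1), ?_⟩⟩, fun n => rfl⟩, ?_⟩
  · have hne : β.get n * β.get (n + 1) ≠ .zero := by
      obtain ⟨s, ⟨_, _, _, _, _, hs⟩, _⟩ := hβ (FP.mul_two β n (n + 1) n.lt_succ_self)
      rw [hs]
      nofun
    rw [hβt, hβt] at hne
    exact Block.lt_of_mk_mul_mk_ne_zero hne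
  · rintro _ ⟨s, hs, rfl⟩
    obtain ⟨u, ⟨_, _, _, _, _, hu⟩, hP⟩ := hβ (FR_subset_FP β ⟨s, hs, rfl⟩)
    rwa [← val_eq_realize_of_realize_eq_mk (fun n => ⟨m n, M n, hβt n⟩) s hu]

end Blocks

/-- Every semigroup is a Ramsey algebra. -/
theorem semigroup_is_ramsey_algebra {S : Type v} [Semigroup S]
    (a : ℕ → S) (X : Set S) :
    ∃ b, SeqReduction (binI (· * ·)) b a ∧
      (FR (binI (· * ·)) b ⊆ X ∨ FR (binI (· * ·)) b ∩ X = ∅) := by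
  obtain ⟨c, hc, β, hβ⟩ := Hindman.FP_partition_regular (blockSeq a) {blocksIn a X, blocksIn a Xᶜ}
    (toFinite _) (by simpa using FP_blockSeq_subset_union a X)
  rcases hc with rfl | rfl
  · obtain ⟨b, hb, hFR⟩ := exists_reduction_FR_subset_of_FP_subset hβ
    exact ⟨b, hb, Or.inl hFR⟩
  · obtain ⟨b, hb, hFR⟩ := exists_reduction_FR_subset_of_FP_subset hβ
    exact ⟨b, hb, Or.inr (subset_compl_iff_disjoint_right.mp hFR).inter_eq⟩
end

section
/- Let L be the first-order language with a single binary function symbol f, and let 𝒜 be an orderly semigroup, i.e., an orderly L-algebra satisfying 𝒜(f (f t₁ t₂) t₃) = 𝒜(f t₁ (f t₂ t₃)) for all orderly terms t₁ < t₂ < t₃. Then 𝒜(s) = 𝒜(t) whenever s and t are orderly terms in which exactly the same variables occur. -/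
open Function Set

universe u v w

/-! Reassociating to the right turns every orderly term into the right comb
`f v_{i₀} (f v_{i₁} (⋯ (f v_{i_{n-1}} v_{i_n})))` on its variable list, and associativity
lets each reassociation step be taken inside `𝒜`. Two orderly terms with the same set of
variables have the same (strictly increasing) variable list, hence the same comb. -/

@[elab_as_elim]
theorem Tm.binInduction {P : Tm BinF → Prop} (hvar : ∀ i, P (.var i))
    (hfapp : ∀ s t, P s → P t → P (fapp s t)) (t : Tm BinF) : P t := by
  induction t with
  | var i => exact hvar i
  | func g ts ih =>
    cases g
    have hts : Tm.func BinF.f ts = fapp (ts 0) (ts 1) := by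
      rw [fapp]; congr; funext k; fin_cases k <;> rfl
    exact hts ▸ hfapp _ _ (ih 0) (ih 1)

@[simp]
theorem Tm.varList_var (i : ℕ) : (Tm.var i : Tm BinF).varList = [i] := rfl

@[simp]
theorem Tm.varList_fapp_s3 (s t : Tm BinF) : (fapp s t).varList = s.varList ++ t.varList := by
  simp [fapp, Tm.varList, List.finRange_succ]

theorem Tm.orderly_iff_s3 {t : Tm BinF} : t.Orderly ↔ t.varList.IsChain (· < ·) := Iff.rfl

theorem Tm.varList_ne_nil_s3 (t : Tm BinF) : t.varList ≠ [] := by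
  induction t using Tm.binInduction with
  | hvar => simp
  | hfapp s t hs _ => simp [hs]

theorem Tm.orderly_fapp_iff {s t : Tm BinF} :
    (fapp s t).Orderly ↔ s.Orderly ∧ t.Orderly ∧ s.TermLT t := by
  simp [Tm.orderly_iff_s3, Tm.TermLT, List.isChain_append,
    List.getLast?_eq_some_getLast s.varList_ne_nil_s3, List.head?_eq_some_head t.varList_ne_nil_s3]

theorem Tm.termLT_fapp_left {s t u : Tm BinF} : (fapp s t).TermLT u ↔ t.TermLT u := by
  simp [Tm.TermLT, List.getLast?_append_of_ne_nil _ t.varList_ne_nil_s3]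

theorem IsOrderlyAlg.fapp_congr {β : Type w} {𝒜 : Tm BinF → β} (h𝒜 : IsOrderlyAlg 𝒜)
    {s t s' t' : Tm BinF} (hst : (fapp s t).Orderly) (hst' : (fapp s' t').Orderly)
    (hs : 𝒜 s = 𝒜 s') (ht : 𝒜 t = 𝒜 t') : 𝒜 (fapp s t) = 𝒜 (fapp s' t') := by
  have ordTuple_pair {s t : Tm BinF} (h : (fapp s t).Orderly) : OrdTuple ![s, t] := by
    obtain ⟨hs, ht, hlt⟩ := Tm.orderly_fapp_iff.mp h
    refine ⟨fun i => by fin_cases i <;> assumption, fun i j hij => ?_⟩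
    fin_cases i <;> fin_cases j <;> simp_all
  refine h𝒜 2 BinF.f _ _ (ordTuple_pair hst) (ordTuple_pair hst') fun k => ?_
  fin_cases k <;> assumption

def IsOrderlySemigroup {β : Type w} (𝒜 : Tm BinF → β) : Prop :=
  IsOrderlyAlg 𝒜 ∧ ∀ t₁ t₂ t₃ : Tm BinF, t₁.Orderly → t₂.Orderly → t₃.Orderly →
    Tm.TermLT t₁ t₂ → Tm.TermLT t₂ t₃ → 𝒜 (fapp (fapp t₁ t₂) t₃) = 𝒜 (fapp t₁ (fapp t₂ t₃))

def comb : ℕ → List ℕ → Tm BinF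
  | i, [] => .var i
  | i, j :: l => fapp (.var i) (comb j l)

@[simp]
theorem varList_comb (i : ℕ) (l : List ℕ) : (comb i l).varList = i :: l := by
  induction l generalizing i with
  | nil => rfl
  | cons j l ih => simp [comb, ih]

namespace IsOrderlySemigroup

variable {β : Type w} {𝒜 : Tm BinF → β}

theorem assoc (h : IsOrderlySemigroup 𝒜) {t₁ t₂ t₃ : Tm BinF}
    (hord : (fapp (fapp t₁ t₂) t₃).Orderly) :
    𝒜 (fapp (fapp t₁ t₂) t₃) = 𝒜 (fapp t₁ (fapp t₂ t₃)) := by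
  obtain ⟨h₁₂, h₃, h₁₂₃⟩ := Tm.orderly_fapp_iff.mp hord
  obtain ⟨h₁, h₂, h₁₂'⟩ := Tm.orderly_fapp_iff.mp h₁₂
  exact h.2 _ _ _ h₁ h₂ h₃ h₁₂' (Tm.termLT_fapp_left.mp h₁₂₃)

theorem fapp_comb_comb (h : IsOrderlySemigroup 𝒜) {i j : ℕ} {l₁ l₂ : List ℕ}
    (hord : (i :: (l₁ ++ j :: l₂)).IsChain (· < ·)) :
    𝒜 (fapp (comb i l₁) (comb j l₂)) = 𝒜 (comb i (l₁ ++ j :: l₂)) := by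
  induction l₁ generalizing i with
  | nil => rfl
  | cons k l ih =>
    calc 𝒜 (fapp (fapp (.var i) (comb k l)) (comb j l₂))
        = 𝒜 (fapp (.var i) (fapp (comb k l) (comb j l₂))) :=
          h.assoc (by simpa [Tm.orderly_iff_s3] using hord)
      _ = 𝒜 (fapp (.var i) (comb k (l ++ j :: l₂))) :=
          h.1.fapp_congr (by simpa [Tm.orderly_iff_s3] using hord) (by simpa [Tm.orderly_iff_s3] using hord)
            rfl (ih hord.tail)

theorem eq_comb (h : IsOrderlySemigroup 𝒜) {t : Tm BinF} (ht : t.Orderly) {i : ℕ}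
    {l : List ℕ} (hvl : t.varList = i :: l) : 𝒜 t = 𝒜 (comb i l) := by
  induction t using Tm.binInduction generalizing i l with
  | hvar k =>
    obtain ⟨rfl, rfl⟩ : k = i ∧ [] = l := by simpa using hvl
    rfl
  | hfapp s t ihs iht =>
    obtain ⟨hs, ht', -⟩ := Tm.orderly_fapp_iff.mp ht
    obtain ⟨a, la, hsl⟩ := List.exists_cons_of_ne_nil s.varList_ne_nil_s3
    obtain ⟨b, lb, htl⟩ := List.exists_cons_of_ne_nil t.varList_ne_nil_s3
    obtain ⟨rfl, rfl⟩ : a = i ∧ la ++ b :: lb = l := by simpa [hsl, htl] using hvl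
    have hord : (a :: (la ++ b :: lb)).IsChain (· < ·) := by
      simpa [Tm.orderly_iff_s3, hsl, htl] using ht
    calc 𝒜 (fapp s t) = 𝒜 (fapp (comb a la) (comb b lb)) :=
          h.1.fapp_congr ht (by simpa [Tm.orderly_iff_s3] using hord) (ihs hs hsl) (iht ht' htl)
      _ = 𝒜 (comb a (la ++ b :: lb)) := h.fapp_comb_comb hord

end IsOrderlySemigroup

/-- In an orderly semigroup `𝒜`, `𝒜(s) = 𝒜(t)` whenever
exactly the same variables occur in the orderly terms `s` and `t`. -/
theorem orderly_semigroup_same_vars {β : Type w} (𝒜 : Tm BinF → β)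
    (h𝒜 : IsOrderlyAlg 𝒜)
    (hassoc : ∀ t₁ t₂ t₃ : Tm BinF, t₁.Orderly → t₂.Orderly → t₃.Orderly →
      Tm.TermLT t₁ t₂ → Tm.TermLT t₂ t₃ →
      𝒜 (fapp (fapp t₁ t₂) t₃) = 𝒜 (fapp t₁ (fapp t₂ t₃)))
    (s t : Tm BinF) (hs : s.Orderly) (ht : t.Orderly)
    (hvar : ∀ i, i ∈ s.varList ↔ i ∈ t.varList) :
    𝒜 s = 𝒜 t := by
  have h : IsOrderlySemigroup 𝒜 := ⟨h𝒜, hassoc⟩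
  have hvl : s.varList = t.varList :=
    (List.isChain_iff_pairwise.mp hs).eq_of_mem_iff (List.isChain_iff_pairwise.mp ht) hvar
  obtain ⟨i, l, hsl⟩ := List.exists_cons_of_ne_nil s.varList_ne_nil_s3
  rw [h.eq_comb hs hsl, h.eq_comb ht (hvl ▸ hsl)]
end

section
/- Let L be a first-order language all of whose symbols are function symbols of arity ≥ 1, having at least one function symbol, and let 𝒜 be an orderly L-algebra. If 𝒜 is one-to-one (injective as a function on orderly terms), then 𝒜 is not weakly Ramsey (and hence not Ramsey). -/
open Function Set

universe u v w

namespace Tm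

variable {F : ℕ → Type u}

def leftDepth : Tm F → ℕ
  | .var _ => 0
  | .func (n := 0) _ _ => 0
  | .func (n := _ + 1) _ ts => leftDepth (ts 0) + 1

theorem leftDepth_func {n : ℕ} (f : F (n + 1)) (ts : Fin (n + 1) → Tm F) :
    (Tm.func f ts).leftDepth = (ts 0).leftDepth + 1 :=
  rfl

theorem subst_var (t : Tm F) : t.subst .var = t := by
  induction t with
  | var i => rfl
  | func f ts ih => exact congrArg (Tm.func f) (funext ih)

theorem admissible_var_s10 : Admissible (.var : ℕ → Tm F) :=
  ⟨fun _ => List.isChain_singleton _, fun i => ⟨i, i + 1, rfl, rfl, i.lt_succ_self⟩⟩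

theorem Admissible.varList_ne_nil {ts : ℕ → Tm F} (h : Admissible ts) (i : ℕ) :
    (ts i).varList ≠ [] := by
  obtain ⟨_, _, ha, -, -⟩ := h.2 i
  rintro hnil
  simp [hnil] at ha

theorem Admissible.orderly_func {ts : ℕ → Tm F} (h : Admissible ts) {n : ℕ} (f : F n) :
    (Tm.func f fun i : Fin n => ts i).Orderly := by
  change ((List.finRange n).map fun i : Fin n => (ts i).varList).flatten.IsChain (· < ·)
  rw [List.isChain_flatten (by simpa using fun i : Fin n => h.varList_ne_nil i)]
  refine ⟨fun l hl => ?_, ?_⟩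
  · obtain ⟨i, -, rfl⟩ := List.mem_map.1 hl
    exact h.1 i
  rw [List.isChain_map, List.isChain_iff_getElem]
  intro i _ x hx y hy
  obtain ⟨a, b, ha, hb, hab⟩ := h.2 i
  simp only [List.getElem_finRange, Fin.val_cast, ha, hb, Option.mem_some_iff] at hx hy
  exact hx ▸ hy ▸ hab

end Tm

section OrderlyAlgebra

variable {F : ℕ → Type u} {β : Type w}

theorem OAReduction.refl (𝒜 : Tm F → β) : OAReduction 𝒜 𝒜 :=
  ⟨.var, Tm.admissible_var_s10, fun s _ => by rw [Tm.subst_var]⟩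

theorem RamseyOA.weaklyRamseyOA {𝒜 : Tm F → β} (h : RamseyOA 𝒜) : WeaklyRamseyOA 𝒜 :=
  fun X hX => h 𝒜 (.refl 𝒜) X hX

theorem Homog.mem_iff_mem {ℬ : Tm F → β} {X : Set β} (h : Homog ℬ X) {s t : Tm F}
    (hs : s.Orderly) (ht : t.Orderly) : ℬ s ∈ X ↔ ℬ t ∈ X := by
  rcases h with hsub | hdisj
  · exact iff_of_true (hsub ⟨s, hs, rfl⟩) (hsub ⟨t, ht, rfl⟩)
  · exact iff_of_false (fun hX => hdisj.subset ⟨⟨s, hs, rfl⟩, hX⟩)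
      (fun hX => hdisj.subset ⟨⟨t, ht, rfl⟩, hX⟩)

/-- Colour `𝒜 t` by the parity of the leftmost-branch length of `t`, well defined by
injectivity. A reduction along `ts` contains `𝒜 (ts 0)` and `𝒜 (f ts₀ ⋯ tsₙ)`, whose
leftmost branches differ in length by one, so it is not homogeneous. -/
theorem not_weaklyRamseyOA_of_injOn [IsEmpty (F 0)] [Nonempty (Σ n, F n)] {𝒜 : Tm F → β}
    (hinj : InjOn 𝒜 {t | t.Orderly}) : ¬ WeaklyRamseyOA 𝒜 := by
  obtain ⟨_ | n, f⟩ := ‹Nonempty (Σ n, F n)›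
  · exact isEmptyElim f
  set X := 𝒜 '' {t | t.Orderly ∧ Even t.leftDepth}
  have mem_X {t : Tm F} (ht : t.Orderly) : 𝒜 t ∈ X ↔ Even t.leftDepth :=
    (hinj.mem_image_iff (fun _ h => h.1) ht).trans (and_iff_right ht)
  intro hW
  obtain ⟨ℬ, ⟨ts, hts, hℬ⟩, hhom⟩ := hW X (image_mono fun _ h => h.1)
  have hvar : (Tm.var 0 : Tm F).Orderly := List.isChain_singleton _
  have hfunc := Tm.admissible_var_s10.orderly_func f
  have key := hhom.mem_iff_mem hvar hfunc
  rw [hℬ _ hvar, hℬ _ hfunc] at key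
  change 𝒜 (ts 0) ∈ X ↔ 𝒜 (Tm.func f fun i => ts i) ∈ X at key
  rw [mem_X (hts.1 0), mem_X (hts.orderly_func f), Tm.leftDepth_func] at key
  exact (iff_not_self (key.trans Nat.even_add_one)).elim

end OrderlyAlgebra

theorem injective_not_weakly_ramsey_general {F : ℕ → Type u} [IsEmpty (F 0)]
    [Nonempty (Σ n, F n)] {β : Type w}
    (𝒜 : Tm F → β)
    (hinj : Set.InjOn 𝒜 { t : Tm F | t.Orderly }) :
    ¬ WeaklyRamseyOA 𝒜 ∧ ¬ RamseyOA 𝒜 :=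
  have h := not_weaklyRamseyOA_of_injOn hinj
  ⟨h, fun hR => h hR.weaklyRamseyOA⟩

/-- If an orderly algebra over a nonempty language is
one-to-one (on orderly terms), then it is not weakly Ramsey and hence not
Ramsey. -/
theorem injective_not_weakly_ramsey {F : ℕ → Type u} [IsEmpty (F 0)]
    [Nonempty (Σ n, F n)] {β : Type w}
    (𝒜 : Tm F → β) (h𝒜 : IsOrderlyAlg 𝒜)
    (hinj : Set.InjOn 𝒜 { t : Tm F | t.Orderly }) :
    ¬ WeaklyRamseyOA 𝒜 ∧ ¬ RamseyOA 𝒜 :=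
  injective_not_weakly_ramsey_general 𝒜 hinj
end

section
/- If A is an infinite set and f : A × A → A is a one-to-one (injective) binary operation on A, then the algebra (A, f), regarded as a structure for the language with a single binary function symbol interpreted as f, is not a Ramsey algebra. -/
open Function Set

universe u v w

/-!
Let `g` be a left retraction of the injective operation `f`, so `g (f (x, y)) = x`, and pick a
point `c` that is not `g`-periodic; such a point exists because, if every point were periodic,
all the distinct elements `f (x, y)` would lie on the finite `g`-orbit of `x`. Every value of a
term on the constant sequence `c` reaches `c` under iteration of `g`, and `f (x, y)` needs one
step more than `x`. Colouring an element by the parity of its number of steps to `c`, the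
elements `b 0` and `f (b 0, b 1)` of `FR(b)` get different colours for every reduction `b` of
the constant sequence `c`.
-/

namespace Function

variable {α : Type*} {g : α → α}

theorem exists_iterate_apply_apply_eq_self {z : α} (hz : z ∈ periodicPts g) :
    ∃ n, g^[n] (g z) = z := by
  obtain ⟨_ | k, hk, hkz⟩ := mem_periodicPts.mp hz
  · exact absurd hk (lt_irrefl 0)
  · exact ⟨k, hkz⟩

/-- Equal to `0` when `c` is never reached from `x`. -/
noncomputable def stepsTo (g : α → α) (c x : α) : ℕ := sInf {n | g^[n] x = c}

theorem iterate_stepsTo {c x : α} (hx : ∃ n, g^[n] x = c) : g^[stepsTo g c x] x = c :=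
  Nat.sInf_mem hx

theorem stepsTo_of_apply_eq {c x z : α} (hx : ∃ n, g^[n] x = c) (hzc : z ≠ c) (hz : g z = x) :
    stepsTo g c z = stepsTo g c x + 1 := by
  have hzx : ∀ n, g^[n + 1] z = g^[n] x := fun n => by rw [iterate_succ_apply, hz]
  have hreach : g^[stepsTo g c x + 1] z = c := by rw [hzx]; exact iterate_stepsTo hx
  refine le_antisymm (Nat.sInf_le hreach) ?_
  obtain ⟨k, hk⟩ := Nat.exists_eq_add_one_of_ne_zero fun h0 : stepsTo g c z = 0 =>
    hzc (by simpa [h0] using iterate_stepsTo ⟨_, hreach⟩)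
  have hkx : g^[k] x = c := by rw [← hzx, ← hk]; exact iterate_stepsTo ⟨_, hreach⟩
  rw [hk]
  exact Nat.succ_le_succ (Nat.sInf_le hkx)

end Function

open Function

section LeftRetraction

variable {A : Type*} {op : A → A → A} {g : A → A}

theorem exists_not_mem_periodicPts [Infinite A] (hg : ∀ x y, g (op x y) = x)
    (hop : ∀ x, Injective (op x)) : ∃ c, c ∉ periodicPts g := by
  by_contra! hper
  obtain ⟨x⟩ := ‹Infinite A›.nonempty
  refine infinite_range_of_injective (hop x)
    (((Set.finite_Iio (minimalPeriod g x)).image fun n => g^[n] x).subset ?_)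
  rintro _ ⟨y, rfl⟩
  obtain ⟨n, hn⟩ := exists_iterate_apply_apply_eq_self (hper (op x y))
  rw [hg] at hn
  exact ⟨n % minimalPeriod g x, Nat.mod_lt _ (minimalPeriod_pos_of_mem_periodicPts (hper x)),
    (iterate_mod_minimalPeriod_eq).trans hn⟩

theorem exists_iterate_realize_const_eq (hg : ∀ x y, g (op x y) = x) (c : A) (t : Tm BinF) :
    ∃ n, g^[n] (t.realize (binI op) fun _ => c) = c := by
  induction t with
  | var i => exact ⟨0, rfl⟩
  | func fn ts ih =>
    cases fn
    obtain ⟨n, hn⟩ := ih 0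
    exact ⟨n + 1, by rw [iterate_succ_apply]; exact (congrArg _ (hg _ _)).trans hn⟩

theorem even_stepsTo_op_iff (hg : ∀ x y, g (op x y) = x) {c x : A} (hc : c ∉ periodicPts g)
    (hx : ∃ n, g^[n] x = c) (y : A) :
    Even (stepsTo g c (op x y)) ↔ ¬ Even (stepsTo g c x) := by
  have hne : op x y ≠ c := by
    rintro rfl
    obtain ⟨n, hn⟩ := hx
    exact hc (mem_periodicPts.mpr ⟨n + 1, n.succ_pos, by rw [IsPeriodicPt, IsFixedPt,
      iterate_succ_apply, hg, hn]⟩)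
  rw [stepsTo_of_apply_eq hx hne (hg x y), Nat.even_add_one]

theorem var_mem_FR {F : ℕ → Type*} (I : ∀ n, F n → (Fin n → A) → A) (b : ℕ → A) (i : ℕ) :
    b i ∈ FR I b :=
  ⟨.var i, List.isChain_singleton i, rfl⟩

theorem op_mem_FR (op : A → A → A) (b : ℕ → A) {i j : ℕ} (hij : i < j) :
    op (b i) (b j) ∈ FR (binI op) b :=
  ⟨fapp (.var i) (.var j), List.isChain_pair.mpr hij, rfl⟩

theorem not_ramseyAlg_binI_of_leftRetraction (hg : ∀ x y, g (op x y) = x) {c : A}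
    (hc : c ∉ periodicPts g) : ¬ RamseyAlg (binI op) := by
  intro hR
  obtain ⟨b, ⟨ts, -, hb⟩, hhom⟩ := hR (fun _ => c) {x | Even (stepsTo g c x)}
  have hreach : ∃ n, g^[n] (b 0) = c := hb 0 ▸ exists_iterate_realize_const_eq hg c (ts 0)
  have hflip := even_stepsTo_op_iff hg hc hreach (b 1)
  have h0 := var_mem_FR (binI op) b 0
  have h1 := op_mem_FR op b zero_lt_one
  rcases hhom with hsub | hdis
  · exact hflip.mp (hsub h1) (hsub h0)
  · exact hdis.subset ⟨h1, hflip.mpr fun h => hdis.subset ⟨h0, h⟩⟩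

end LeftRetraction

/-- If `A` is infinite and `f : A × A → A` is injective,
then `(A, f)` is not a Ramsey algebra. -/
theorem injective_binary_not_ramsey {A : Type v} [Infinite A]
    (f : A × A → A) (hf : Function.Injective f) :
    ¬ RamseyAlg (binI fun x y => f (x, y)) := by
  let g : A → A := fun z => (invFun f z).1
  have hg : ∀ x y, g (f (x, y)) = x := fun x y => by simp only [g, leftInverse_invFun hf (x, y)]
  obtain ⟨c, hc⟩ := exists_not_mem_periodicPts hg fun x => hf.comp (Prod.mk_right_injective x)
  exact not_ramseyAlg_binI_of_leftRetraction hg hc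
end
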